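/- Let (X, μ) be a finite measure space, δ a positive integer, and M > 0. Let (u_n) be a sequence of measurable real-valued functions and u a measurable real-valued function such that: (i) ∫ |u_n − u|² dμ → 0 as n → ∞; (ii) ‖u_n‖_{L^{2(δ+1)}(μ)} ≤ M for all n; (iii) u ∈ L^{2(δ+1)}(μ). Then for every g ∈ L^{2(δ+1)}(μ), ∫ u_n^{δ+1}·g dμ → ∫ u^{δ+1}·g dμ as n → ∞. -/

import Mathlib

open MeasureTheory Filter

/-- The L^p(μ) norm ‖f‖_{L^p(μ)} = (∫ |f|^p dμ)^{1/p}. -/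
noncomputable def lpNormR {X : Type*} [MeasurableSpace X] (μ : Measure X) (p : ℕ)
    (f : X → ℝ) : ℝ :=
  (∫ x, |f x| ^ p ∂μ) ^ ((1 : ℝ) / p)

/-!
Write `k = δ + 1`. Absorbing `|c|` into the power gives the pointwise bound
`|a ^ k - b ^ k| * |c| ≤ k * |a - b| * (|a| + |b| + |c|) ^ k`, so Hölder's inequality with
exponents `(2, 2)` yields
`|∫ u_n ^ k g - ∫ u ^ k g| ≤ k ‖u_n - u‖₂ (‖u_n‖_{2k} + ‖u‖_{2k} + ‖g‖_{2k}) ^ k`.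
The last factor is bounded uniformly in `n` and the first tends to `0`.
-/

open scoped ENNReal Topology

lemma abs_pow_sub_pow_mul_le (a b c : ℝ) (k : ℕ) :
    |(a ^ k - b ^ k) * c| ≤ k * |a - b| * (|a| + |b| + |c|) ^ k := by
  obtain _ | n := k
  · simp
  have hmax : max |a| |b| ≤ |a| + |b| + |c| :=
    max_le (by linarith [abs_nonneg b, abs_nonneg c]) (by linarith [abs_nonneg a, abs_nonneg c])
  have hc : |c| ≤ |a| + |b| + |c| := by linarith [abs_nonneg a, abs_nonneg b]
  calc |(a ^ (n + 1) - b ^ (n + 1)) * c|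
      ≤ |a - b| * (n + 1 : ℕ) * max |a| |b| ^ n * |c| := by
        rw [abs_mul]
        gcongr
        simpa using abs_pow_sub_pow_le a b (n + 1)
    _ ≤ |a - b| * (n + 1 : ℕ) * (|a| + |b| + |c|) ^ n * (|a| + |b| + |c|) := by gcongr
    _ = _ := by ring

lemma ENNReal.two_le_two_mul_natCast {k : ℕ} (hk : k ≠ 0) : (2 : ℝ≥0∞) ≤ 2 * k :=
  le_mul_of_one_le_right' (by exact_mod_cast Nat.one_le_iff_ne_zero.2 hk)

namespace MeasureTheory

variable {α : Type*} [MeasurableSpace α] {μ : Measure α}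

lemma eLpNorm_pow (f : α → ℝ) {k : ℕ} (hk : k ≠ 0) (p : ℝ≥0∞) :
    eLpNorm (fun x => f x ^ k) p μ = eLpNorm f (p * k) μ ^ k := by
  have := eLpNorm_norm_rpow (μ := μ) (p := p) f (q := k) (by positivity)
  simp only [Real.norm_eq_abs, Real.rpow_natCast, ENNReal.ofReal_natCast,
    ENNReal.rpow_natCast] at this
  rw [← this]
  exact eLpNorm_congr_norm_ae (ae_of_all _ fun x => by simp)

lemma MemLp.pow {f : α → ℝ} {k : ℕ} (hk : k ≠ 0) {p : ℝ≥0∞} (hf : MemLp f (p * k) μ) :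
    MemLp (fun x => f x ^ k) p μ :=
  ⟨hf.1.pow k, by rw [eLpNorm_pow f hk]; exact ENNReal.pow_lt_top hf.2⟩

lemma eLpNorm_pow_sub_pow_mul_le {f f' g : α → ℝ} (hf : AEStronglyMeasurable f μ)
    (hf' : AEStronglyMeasurable f' μ) (hg : AEStronglyMeasurable g μ) {k : ℕ} (hk : k ≠ 0) :
    eLpNorm (fun x => (f x ^ k - f' x ^ k) * g x) 1 μ ≤
      k * eLpNorm (f - f') 2 μ * eLpNorm (fun x => |f x| + |f' x| + |g x|) (2 * k) μ ^ k := by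
  set S := fun x => |f x| + |f' x| + |g x|
  have hS : AEStronglyMeasurable S μ := (hf.norm.add hf'.norm).add hg.norm
  calc eLpNorm (fun x => (f x ^ k - f' x ^ k) * g x) 1 μ
      ≤ eLpNorm (fun x => (k : ℝ) * (|f x - f' x| * S x ^ k)) 1 μ :=
        eLpNorm_mono_real fun x => (abs_pow_sub_pow_mul_le _ _ _ k).trans_eq (by ring)
    _ = k * eLpNorm (fun x => |(f - f') x| * S x ^ k) 1 μ := by
        simpa [Pi.smul_def] using
          eLpNorm_const_smul (k : ℝ) (fun x => |(f - f') x| * S x ^ k) 1 μ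
    _ ≤ k * (eLpNorm (f - f') 2 μ * eLpNorm (fun x => S x ^ k) 2 μ) := by
        have holder := eLpNorm_le_eLpNorm_mul_eLpNorm'_of_norm (p := 2) (q := 2) (r := 1)
          (f := f - f') (g := fun x => S x ^ k) (hf.sub hf') (hS.pow k) (fun a b => |a| * b) 1
          (ae_of_all _ fun x => by simp)
        rw [ENNReal.coe_one, one_mul] at holder
        gcongr
    _ = _ := by rw [eLpNorm_pow S hk, mul_assoc]

lemma MemLp.integrable_pow_mul [IsFiniteMeasure μ] {f g : α → ℝ} {k : ℕ} (hk : k ≠ 0)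
    (hf : MemLp f (2 * k) μ) (hg : MemLp g (2 * k) μ) :
    Integrable (fun x => f x ^ k * g x) μ :=
  (hf.pow hk).integrable_mul (hg.mono_exponent (ENNReal.two_le_two_mul_natCast hk))

theorem tendsto_integral_pow_mul_of_tendsto_eLpNorm_sub [IsFiniteMeasure μ] {k : ℕ}
    (hk : k ≠ 0) {f : ℕ → α → ℝ} {f₀ g : α → ℝ} {C : ℝ≥0∞} (hC : C ≠ ∞)
    (hf : ∀ n, MemLp (f n) (2 * k) μ) (hf₀ : MemLp f₀ (2 * k) μ) (hg : MemLp g (2 * k) μ)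
    (hbdd : ∀ n, eLpNorm (f n) (2 * k) μ ≤ C)
    (hlim : Tendsto (fun n => eLpNorm (f n - f₀) 2 μ) atTop (𝓝 0)) :
    Tendsto (fun n => ∫ x, f n x ^ k * g x ∂μ) atTop (𝓝 (∫ x, f₀ x ^ k * g x ∂μ)) := by
  set B := C + eLpNorm f₀ (2 * k) μ + eLpNorm g (2 * k) μ
  have hB : B ≠ ∞ := by
    have := hf₀.eLpNorm_ne_top
    have := hg.eLpNorm_ne_top
    finiteness
  have h1 : (1 : ℝ≥0∞) ≤ 2 * k := one_le_two.trans (ENNReal.two_le_two_mul_natCast hk)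
  have hsum : ∀ n, eLpNorm (fun x => |f n x| + |f₀ x| + |g x|) (2 * k) μ ≤ B := fun n =>
    calc eLpNorm (fun x => |f n x| + |f₀ x| + |g x|) (2 * k) μ
        ≤ eLpNorm (fun x => ‖f n x‖) (2 * k) μ + eLpNorm (fun x => ‖f₀ x‖) (2 * k) μ
          + eLpNorm (fun x => ‖g x‖) (2 * k) μ :=
          (eLpNorm_add_le ((hf n).1.norm.add hf₀.1.norm) hg.1.norm h1).trans
            (by gcongr; exact eLpNorm_add_le (hf n).1.norm hf₀.1.norm h1)
      _ ≤ C + eLpNorm f₀ (2 * k) μ + eLpNorm g (2 * k) μ := by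
          simp only [eLpNorm_norm]; gcongr; exact hbdd n
  have hdist : ∀ n, edist (∫ x, f n x ^ k * g x ∂μ) (∫ x, f₀ x ^ k * g x ∂μ) ≤
      k * eLpNorm (f n - f₀) 2 μ * B ^ k := fun n =>
    calc edist (∫ x, f n x ^ k * g x ∂μ) (∫ x, f₀ x ^ k * g x ∂μ)
        = ‖∫ x, (f n x ^ k - f₀ x ^ k) * g x ∂μ‖ₑ := by
          rw [edist_eq_enorm_sub, ← integral_sub ((hf n).integrable_pow_mul hk hg)
            (hf₀.integrable_pow_mul hk hg)]
          simp only [sub_mul]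
      _ ≤ eLpNorm (fun x => (f n x ^ k - f₀ x ^ k) * g x) 1 μ :=
          (enorm_integral_le_lintegral_enorm _).trans_eq eLpNorm_one_eq_lintegral_enorm.symm
      _ ≤ k * eLpNorm (f n - f₀) 2 μ *
            eLpNorm (fun x => |f n x| + |f₀ x| + |g x|) (2 * k) μ ^ k :=
          eLpNorm_pow_sub_pow_mul_le (hf n).1 hf₀.1 hg.1 hk
      _ ≤ k * eLpNorm (f n - f₀) 2 μ * B ^ k := by gcongr; exact hsum n
  have hbound : Tendsto (fun n => k * eLpNorm (f n - f₀) 2 μ * B ^ k) atTop (𝓝 0) := by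
    simpa using ENNReal.Tendsto.mul_const
      (ENNReal.Tendsto.const_mul hlim (Or.inr (ENNReal.natCast_ne_top k)))
      (Or.inr (ENNReal.pow_ne_top hB))
  rw [tendsto_iff_edist_tendsto_0]
  exact tendsto_of_tendsto_of_tendsto_of_le_of_le tendsto_const_nhds hbound (fun _ => zero_le)
    hdist

lemma memLp_of_integrable_abs_pow {f : α → ℝ} (hf : AEStronglyMeasurable f μ) {p : ℕ}
    (hp : p ≠ 0) (h : Integrable (fun x => |f x| ^ p) μ) : MemLp f p μ := by
  rw [← integrable_norm_rpow_iff hf (by exact_mod_cast hp) (ENNReal.natCast_ne_top p)]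
  simpa using h

lemma MemLp.eLpNorm_eq_ofReal_lpNormR {f : α → ℝ} {p : ℕ} (hp : p ≠ 0) (hf : MemLp f p μ) :
    eLpNorm f p μ = ENNReal.ofReal (lpNormR μ p f) := by
  rw [hf.eLpNorm_eq_integral_rpow_norm (by exact_mod_cast hp) (ENNReal.natCast_ne_top p),
    lpNormR]
  simp [one_div]

lemma tendsto_eLpNorm_zero_of_tendsto_integral_abs_pow {f : ℕ → α → ℝ} {p : ℕ} (hp : p ≠ 0)
    (hf : ∀ n, MemLp (f n) p μ) (h : Tendsto (fun n => ∫ x, |f n x| ^ p ∂μ) atTop (𝓝 0)) :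
    Tendsto (fun n => eLpNorm (f n) p μ) atTop (𝓝 0) := by
  simp_rw [fun n => (hf n).eLpNorm_eq_ofReal_lpNormR hp, lpNormR]
  simpa [Real.zero_rpow, hp] using
    ENNReal.tendsto_ofReal (h.rpow_const (p := 1 / p) (Or.inr (by positivity)))

end MeasureTheory

theorem stmt_15_general {X : Type*} [MeasurableSpace X] (μ : Measure X) [IsFiniteMeasure μ]
    (δ : ℕ) (M : ℝ)
    (un : ℕ → X → ℝ) (u : X → ℝ)
    (hun : ∀ n, Measurable (un n)) (hu : Measurable u)
    (hconv : Tendsto (fun n => ∫ x, |un n x - u x| ^ 2 ∂μ) atTop (nhds 0))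
    (hunp : ∀ n, Integrable (fun x => |un n x| ^ (2 * (δ + 1))) μ)
    (hbdd : ∀ n, lpNormR μ (2 * (δ + 1)) (un n) ≤ M)
    (hup : Integrable (fun x => |u x| ^ (2 * (δ + 1))) μ) :
    ∀ g : X → ℝ, Measurable g → Integrable (fun x => |g x| ^ (2 * (δ + 1))) μ →
      Tendsto (fun n => ∫ x, un n x ^ (δ + 1) * g x ∂μ) atTop
        (nhds (∫ x, u x ^ (δ + 1) * g x ∂μ)) := by
  intro g hg hgInt
  have hp : 2 * (δ + 1) ≠ 0 := by omega
  have hcast : ((2 * (δ + 1) : ℕ) : ℝ≥0∞) = 2 * (δ + 1 : ℕ) := by push_cast; ring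
  have memLpNat {f : X → ℝ} (hf : Measurable f)
      (h : Integrable (fun x => |f x| ^ (2 * (δ + 1))) μ) : MemLp f (2 * (δ + 1) : ℕ) μ :=
    memLp_of_integrable_abs_pow hf.aestronglyMeasurable hp h
  have memLp {f : X → ℝ} (hf : Measurable f)
      (h : Integrable (fun x => |f x| ^ (2 * (δ + 1))) μ) : MemLp f (2 * (δ + 1 : ℕ)) μ :=
    hcast ▸ memLpNat hf h
  refine tendsto_integral_pow_mul_of_tendsto_eLpNorm_sub δ.succ_ne_zero
    (ENNReal.ofReal_ne_top (r := M))
    (fun n => memLp (hun n) (hunp n)) (memLp hu hup) (memLp hg hgInt) (fun n => ?_) ?_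
  · rw [← hcast, (memLpNat (hun n) (hunp n)).eLpNorm_eq_ofReal_lpNormR hp]
    exact ENNReal.ofReal_le_ofReal (hbdd n)
  · have hsub n : MemLp (un n - u) (2 : ℕ) μ :=
      ((memLp (hun n) (hunp n)).sub (memLp hu hup)).mono_exponent
        (by simpa using ENNReal.two_le_two_mul_natCast δ.succ_ne_zero)
    simpa using tendsto_eLpNorm_zero_of_tendsto_integral_abs_pow two_ne_zero hsub hconv

/-- Convergence of the nonlinear advection term (paper's estimate (215)): on a finite
measure space, if ∫|u_n − u|² dμ → 0, the u_n ∈ L^{2(δ+1)}(μ) are uniformly bounded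
by M in the L^{2(δ+1)} norm, and u ∈ L^{2(δ+1)}(μ), then for every g ∈ L^{2(δ+1)}(μ),
∫ u_n^{δ+1}·g dμ → ∫ u^{δ+1}·g dμ. -/
theorem stmt_15 {X : Type*} [MeasurableSpace X] (μ : Measure X) [IsFiniteMeasure μ]
    (δ : ℕ) (hδ : 0 < δ) (M : ℝ) (hM : 0 < M)
    (un : ℕ → X → ℝ) (u : X → ℝ)
    (hun : ∀ n, Measurable (un n)) (hu : Measurable u)
    (hconv : Tendsto (fun n => ∫ x, |un n x - u x| ^ 2 ∂μ) atTop (nhds 0))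
    (hunp : ∀ n, Integrable (fun x => |un n x| ^ (2 * (δ + 1))) μ)
    (hbdd : ∀ n, lpNormR μ (2 * (δ + 1)) (un n) ≤ M)
    (hup : Integrable (fun x => |u x| ^ (2 * (δ + 1))) μ) :
    ∀ g : X → ℝ, Measurable g → Integrable (fun x => |g x| ^ (2 * (δ + 1))) μ →
      Tendsto (fun n => ∫ x, un n x ^ (δ + 1) * g x ∂μ) atTop
        (nhds (∫ x, u x ^ (δ + 1) * g x ∂μ)) :=
  stmt_15_general μ δ M un u hun hu hconv hunp hbdd hup
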